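/- arXiv:2310.07710 — 4 statements merged into one kernel-verified Lean document; each statement's English description precedes it below -/
import Mathlib

section
/- For every integer N ≥ 1, every probability mass function p on Fin N, every α ∈ (0,1), every permutation σ of Fin N, and every i ∈ {0,…,N}, the cumulative mass of the DiP-reweight distribution along σ never exceeds the original cumulative mass: ∑_{j<i} P_σ(σ(j)) = max(S_σ(i)−α, 0) + max(S_σ(i)−(1−α), 0) ≤ S_σ(i). Consequently, for every i, the suffix (green-list) mass satisfies ∑_{j≥i} P_σ(σ(j)) ≥ ∑_{j≥i} p(σ(j)), i.e., DiP-reweight promotes the total probability of the green-list tokens for an arbitrary separator position. -/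
/-- Cumulative sum `S_σ(i) = ∑_{j<i} p(σ(j))`. -/
noncomputable def cumS {N : ℕ} (p : Fin N → ℝ) (σ : Equiv.Perm (Fin N)) (i : ℕ) : ℝ :=
  ∑ j ∈ Finset.univ.filter (fun j : Fin N => (j : ℕ) < i), p (σ j)

/-- `F^α_σ(i) = (1/(1−α)) · max(S_σ(i) − α, 0)`. -/
noncomputable def Falpha {N : ℕ} (p : Fin N → ℝ) (σ : Equiv.Perm (Fin N)) (α : ℝ) (i : ℕ) : ℝ :=
  (1 / (1 - α)) * max (cumS p σ i - α) 0

/-- The `P_W^α`-reweight weight of the token `σ(i)`: `P^α_σ(σ(i)) = F^α_σ(i+1) − F^α_σ(i)`. -/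
noncomputable def PWalpha {N : ℕ} (p : Fin N → ℝ) (σ : Equiv.Perm (Fin N)) (α : ℝ)
    (t : Fin N) : ℝ :=
  Falpha p σ α ((σ.symm t : ℕ) + 1) - Falpha p σ α (σ.symm t : ℕ)

/-- The DiP-reweight distribution `P_σ = (1−α)·P^α_σ + α·P^{1−α}_σ`. -/
noncomputable def DiP {N : ℕ} (p : Fin N → ℝ) (σ : Equiv.Perm (Fin N)) (α : ℝ)
    (t : Fin N) : ℝ :=
  (1 - α) * PWalpha p σ α t + α * PWalpha p σ (1 - α) t

lemma filter_succ_insert {N : ℕ} (i : ℕ) (hi : i < N) :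
    Finset.univ.filter (fun j : Fin N => (j : ℕ) < i + 1)
      = insert ⟨i, hi⟩ (Finset.univ.filter (fun j : Fin N => (j : ℕ) < i)) := by
  ext j
  simp [Nat.lt_succ_iff_lt_or_eq, Fin.ext_iff, or_comm]
  omega

lemma prefix_DiP {N : ℕ} (p : Fin N → ℝ) (σ : Equiv.Perm (Fin N)) (α : ℝ)
    (hα0 : 0 < α) (hα1 : α < 1) (i : ℕ) (hi : i ≤ N) :
    (∑ j ∈ Finset.univ.filter (fun j : Fin N => (j : ℕ) < i), DiP p σ α (σ j))
      = max (cumS p σ i - α) 0 + max (cumS p σ i - (1 - α)) 0 := by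
  induction i with
  | zero =>
      have h0 : cumS p σ 0 = 0 := by simp [cumS]
      simp [h0, max_eq_right, le_of_lt hα0, hα1.le, le_of_lt (by linarith : (0:ℝ) < 1 - α)]
  | succ i ih =>
      have hiN : i < N := hi
      rw [filter_succ_insert i hiN, Finset.sum_insert (by simp)]
      rw [ih (le_of_lt hiN)]
      have hD : DiP p σ α (σ ⟨i, hiN⟩)
          = (max (cumS p σ (i + 1) - α) 0 + max (cumS p σ (i + 1) - (1 - α)) 0)
            - (max (cumS p σ i - α) 0 + max (cumS p σ i - (1 - α)) 0) := by
        simp only [DiP, PWalpha, Falpha, Equiv.symm_apply_apply]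
        have h1 : (1 - α) ≠ 0 := by linarith
        have h2 : (1 - (1 - α)) = α := by ring
        rw [h2]
        field_simp
        ring
      rw [hD]; ring

theorem stmt_3 (N : ℕ) (hN : 1 ≤ N) (p : Fin N → ℝ)
    (hp : ∀ j, 0 ≤ p j) (hsum : ∑ j, p j = 1)
    (α : ℝ) (hα0 : 0 < α) (hα1 : α < 1) (σ : Equiv.Perm (Fin N))
    (i : ℕ) (hi : i ≤ N) :
    (∑ j ∈ Finset.univ.filter (fun j : Fin N => (j : ℕ) < i), DiP p σ α (σ j))
      = max (cumS p σ i - α) 0 + max (cumS p σ i - (1 - α)) 0 ∧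
    max (cumS p σ i - α) 0 + max (cumS p σ i - (1 - α)) 0 ≤ cumS p σ i ∧
    (∑ j ∈ Finset.univ.filter (fun j : Fin N => i ≤ (j : ℕ)), p (σ j))
      ≤ ∑ j ∈ Finset.univ.filter (fun j : Fin N => i ≤ (j : ℕ)), DiP p σ α (σ j) := by
  have hpre := prefix_DiP p σ α hα0 hα1 i hi
  have hS0 : 0 ≤ cumS p σ i := Finset.sum_nonneg (fun j _ => hp (σ j))
  have hSN : cumS p σ N = 1 := by
    have hfull : Finset.univ.filter (fun j : Fin N => (j : ℕ) < N) = Finset.univ := by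
      ext j; simp [j.isLt]
    rw [cumS, hfull, Equiv.sum_comp σ p, hsum]
  have hS1 : cumS p σ i ≤ 1 := by
    rw [← hSN]
    apply Finset.sum_le_sum_of_subset_of_nonneg
    · intro j hj
      simp only [Finset.mem_filter, Finset.mem_univ, true_and] at hj ⊢
      exact lt_of_lt_of_le hj hi
    · intro j _ _; exact hp (σ j)
  have hineq : max (cumS p σ i - α) 0 + max (cumS p σ i - (1 - α)) 0 ≤ cumS p σ i := by
    rcases max_cases (cumS p σ i - α) 0 with ⟨h1, h1'⟩ | ⟨h1, h1'⟩ <;>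
      rcases max_cases (cumS p σ i - (1 - α)) 0 with ⟨h2, h2'⟩ | ⟨h2, h2'⟩ <;>
      rw [h1, h2] <;> linarith
  refine ⟨hpre, hineq, ?_⟩
  have key : ∀ f : Fin N → ℝ,
      (∑ j ∈ Finset.univ.filter (fun j : Fin N => (j : ℕ) < i), f j)
        + (∑ j ∈ Finset.univ.filter (fun j : Fin N => i ≤ (j : ℕ)), f j) = ∑ j, f j := by
    intro f
    rw [← Finset.sum_filter_add_sum_filter_not Finset.univ (fun j : Fin N => (j : ℕ) < i) f]
    congr 1
    apply Finset.sum_congr _ (fun _ _ => rfl)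
    ext j; simp [not_lt]
  have hpreN := prefix_DiP p σ α hα0 hα1 N le_rfl
  have hfull : Finset.univ.filter (fun j : Fin N => (j : ℕ) < N) = Finset.univ := by
    ext j; simp [j.isLt]
  have hDiPtot : (∑ j : Fin N, DiP p σ α (σ j)) = 1 := by
    rw [← hfull, hpreN, hSN]
    rw [max_eq_left (by linarith), max_eq_left (by linarith)]
    ring
  have k1 := key (fun j => p (σ j))
  have k2 := key (fun j => DiP p σ α (σ j))
  rw [Equiv.sum_comp σ p, hsum] at k1
  have hc : (∑ j ∈ Finset.univ.filter (fun j : Fin N => (j : ℕ) < i), p (σ j)) = cumS p σ i := rfl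
  rw [hc] at k1
  rw [hDiPtot] at k2
  rw [hpre] at k2
  linarith
end

section
/- For every integer N ≥ 1, every probability mass function p on Fin N, every α ∈ (0,1), every permutation σ of Fin N with reversal σ^r (defined by σ^r(i) = σ(N−1−i)), and every token t ∈ Fin N, the DiP-reweight masses satisfy P_σ(t) + P_{σ^r}(t) = 2·p(t). -/
/-- The reversal `σ^r` of a permutation `σ`, defined by `σ^r(i) = σ(N−1−i)`. -/
def revPermOf {N : ℕ} (σ : Equiv.Perm (Fin N)) : Equiv.Perm (Fin N) :=
  Fin.revPerm.trans σ

lemma max_sub_max_neg (x : ℝ) : max x 0 - max (-x) 0 = x := by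
  rcases le_total x 0 with h | h
  · rw [max_eq_right h, max_eq_left (by linarith)]; ring
  · rw [max_eq_left h, max_eq_right (by linarith)]; ring

lemma key_arith (α a pt : ℝ) :
    (max (a + pt - α) 0 - max (a - α) 0) + (max (a + pt - (1 - α)) 0 - max (a - (1 - α)) 0)
      + (max (1 - a - α) 0 - max (1 - (a + pt) - α) 0)
      + (max (1 - a - (1 - α)) 0 - max (1 - (a + pt) - (1 - α)) 0) = 2 * pt := by
  have e1 := max_sub_max_neg (a + pt - α)
  have e2 := max_sub_max_neg (a - α)
  have e3 := max_sub_max_neg (a + pt - (1 - α))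
  have e4 := max_sub_max_neg (a - (1 - α))
  have r1 : (1 : ℝ) - (a + pt) - (1 - α) = -(a + pt - α) := by ring
  have r2 : (1 : ℝ) - a - (1 - α) = -(a - α) := by ring
  have r3 : (1 : ℝ) - (a + pt) - α = -(a + pt - (1 - α)) := by ring
  have r4 : (1 : ℝ) - a - α = -(a - (1 - α)) := by ring
  rw [r1, r2, r3, r4]
  linarith

lemma cumS_succ {N : ℕ} (p : Fin N → ℝ) (σ : Equiv.Perm (Fin N)) (i : Fin N) :
    cumS p σ ((i : ℕ) + 1) = cumS p σ (i : ℕ) + p (σ i) := by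
  unfold cumS
  have h : Finset.univ.filter (fun j : Fin N => (j : ℕ) < (i : ℕ) + 1)
      = insert i (Finset.univ.filter (fun j : Fin N => (j : ℕ) < (i : ℕ))) := by
    ext j
    simp only [Finset.mem_filter, Finset.mem_univ, true_and, Finset.mem_insert]
    constructor
    · intro h
      rcases Nat.lt_succ_iff_lt_or_eq.mp h with h | h
      · exact Or.inr h
      · exact Or.inl (Fin.ext h)
    · rintro (rfl | h)
      · omega
      · omega
  rw [h, Finset.sum_insert (by simp), add_comm]

lemma cumS_rev {N : ℕ} (p : Fin N → ℝ) (σ : Equiv.Perm (Fin N)) (hsum : ∑ j, p j = 1)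
    (k : ℕ) : cumS p (Fin.revPerm.trans σ) k = 1 - cumS p σ (N - k) := by
  unfold cumS
  have h1 : ∑ j ∈ Finset.univ.filter (fun j : Fin N => (j : ℕ) < k),
      p ((Fin.revPerm.trans σ) j)
      = ∑ j ∈ Finset.univ.filter (fun j : Fin N => ¬ ((j : ℕ) < N - k)), p (σ j) := by
    apply Finset.sum_nbij' (fun j => Fin.rev j) (fun j => Fin.rev j)
    · intro a ha
      simp only [Finset.mem_filter, Finset.mem_univ, true_and] at ha ⊢
      have := a.is_lt
      rw [Fin.val_rev]
      omega
    · intro a ha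
      simp only [Finset.mem_filter, Finset.mem_univ, true_and] at ha ⊢
      have := a.is_lt
      rw [Fin.val_rev]
      omega
    · intro a _; exact Fin.rev_rev a
    · intro a _; exact Fin.rev_rev a
    · intro a _; simp [Equiv.trans_apply]
  rw [h1]
  have h2 : ∑ j ∈ Finset.univ.filter (fun j : Fin N => ((j : ℕ) < N - k)), p (σ j)
      + ∑ j ∈ Finset.univ.filter (fun j : Fin N => ¬ ((j : ℕ) < N - k)), p (σ j)
      = ∑ j, p (σ j) := Finset.sum_filter_add_sum_filter_not _ _ _
  have h3 : ∑ j, p (σ j) = 1 := by rw [Equiv.sum_comp σ p]; exact hsum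
  linarith


lemma coeff_cancel (c x y : ℝ) (hc : c ≠ 0) : c * (1 / c * x - 1 / c * y) = x - y := by
  field_simp

theorem stmt_5 (N : ℕ) (hN : 1 ≤ N) (p : Fin N → ℝ)
    (hp : ∀ j, 0 ≤ p j) (hsum : ∑ j, p j = 1)
    (α : ℝ) (hα0 : 0 < α) (hα1 : α < 1) (σ : Equiv.Perm (Fin N)) (t : Fin N) :
    DiP p σ α t + DiP p (revPermOf σ) α t = 2 * p t := by
  have hst : (revPermOf σ).symm t = Fin.rev (σ.symm t) := by
    simp [revPermOf, Equiv.symm_trans_apply]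
  have hit : σ (σ.symm t) = t := σ.apply_symm_apply t
  have hlt : ((σ.symm t : Fin N) : ℕ) < N := (σ.symm t).is_lt
  have hc1 : cumS p σ ((σ.symm t : ℕ) + 1) = cumS p σ (σ.symm t : ℕ) + p t := by
    rw [cumS_succ, hit]
  have hv : ((Fin.rev (σ.symm t)) : ℕ) = N - ((σ.symm t : ℕ) + 1) := Fin.val_rev _
  have hrev : ∀ k, cumS p (revPermOf σ) k = 1 - cumS p σ (N - k) :=
    fun k => cumS_rev p σ hsum k
  have hc2 : cumS p (revPermOf σ) ((Fin.rev (σ.symm t) : ℕ))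
      = 1 - (cumS p σ (σ.symm t : ℕ) + p t) := by
    rw [hv, hrev, ← hc1]
    congr 2
    omega
  have hc3 : cumS p (revPermOf σ) ((Fin.rev (σ.symm t) : ℕ) + 1)
      = 1 - cumS p σ (σ.symm t : ℕ) := by
    rw [hv, hrev]
    congr 2
    omega
  unfold DiP PWalpha Falpha
  rw [hst, hc1, hc2, hc3]
  have h2 : (1:ℝ) - (1 - α) = α := by ring
  rw [h2]
  have hne1 : (1:ℝ) - α ≠ 0 := by linarith
  have hne2 : α ≠ 0 := ne_of_gt hα0
  rw [coeff_cancel _ _ _ hne1, coeff_cancel _ _ _ hne1,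
      coeff_cancel _ _ _ hne2, coeff_cancel _ _ _ hne2]
  have := key_arith α (cumS p σ (σ.symm t : ℕ)) (p t)
  set a := cumS p σ (σ.symm t : ℕ)
  have e1 : (1:ℝ) - (a + p t) - α = 1 - a - p t - α := by ring
  have e2 : (1:ℝ) - (a + p t) - (1 - α) = 1 - a - p t - (1 - α) := by ring
  rw [e1, e2] at this ⊢
  linarith
end

section
/- (Certified radius under length-changing text modification.) Let n > 0 be a real number (the sequence length), a ≥ 0 a real number (the context window length), γ ∈ (0,1), z a real number, and L a real number (the green token count), and set Φ = L/n − (1−γ). Assume 2 + a − γ + z > 0. Then for every ε ≥ 0, the perturbed detection statistic remains above threshold, i.e., (L − (a+1)·ε·n)/((1+ε)·n) − (1−γ) ≥ z, if and only if ε ≤ (Φ − z)/(2 + a − γ + z). In particular every perturbation budget ε ≤ (Φ − z)/(2 + a − γ + z) is certified. -/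
theorem stmt_12 (n a γ z L : ℝ) (hn : 0 < n) (ha : 0 ≤ a)
    (hγ0 : 0 < γ) (hγ1 : γ < 1) (hden : 0 < 2 + a - γ + z) :
    ∀ ε : ℝ, 0 ≤ ε →
      ((L - (a + 1) * ε * n) / ((1 + ε) * n) - (1 - γ) ≥ z ↔
        ε ≤ ((L / n - (1 - γ)) - z) / (2 + a - γ + z)) := by
  intro ε hε
  have hεn : 0 < (1 + ε) * n := by positivity
  have hL : L / n * n = L := div_mul_cancel₀ L hn.ne'
  rw [ge_iff_le, le_div_iff₀ hden, le_sub_iff_add_le, le_div_iff₀ hεn]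
  constructor <;> intro h
  · rw [← mul_le_mul_iff_of_pos_right hn]; nlinarith [h, hL]
  · nlinarith [mul_le_mul_of_nonneg_right h hn.le, hL]
end

section
/- (The red-green list soft watermark is not distribution-preserving.) Let a, b be real numbers with a + b = 1, 1/2 < a < 1, and 0 < b. Then for every δ > 0, (1/2)·( e^δ·a/(e^δ·a + b) + a/(a + e^δ·b) ) < a. That is, averaging the soft-watermarked probability of the majority token over the two equally likely red-green list assignments strictly decreases its probability. -/
theorem stmt_14 (a b : ℝ) (hab : a + b = 1) (ha2 : 1 / 2 < a) (ha1 : a < 1) (hb : 0 < b) :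
    ∀ δ : ℝ, 0 < δ →
      (1 / 2) * (Real.exp δ * a / (Real.exp δ * a + b) + a / (a + Real.exp δ * b)) < a := by
  intro δ hδ
  have hE : 1 < Real.exp δ := by nlinarith [Real.add_one_le_exp δ]
  set E := Real.exp δ
  have ha0 : 0 < a := by linarith
  have h1 : 0 < E * a + b := by nlinarith
  have h2 : 0 < a + E * b := by nlinarith
  rw [div_add_div _ _ (ne_of_gt h1) (ne_of_gt h2), ← mul_div_assoc, div_lt_iff₀ (by positivity)]
  have hb' : b = 1 - a := by linarith
  subst hb'
  ring_nf
  nlinarith [mul_pos ha0 (sub_pos.2 hE), mul_pos (mul_pos ha0 (mul_pos ha0 hb)) (mul_pos (sub_pos.2 hE) (sub_pos.2 hE)), sq_nonneg (E-1), mul_pos ha0 hb]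
end
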